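/- Suppose E contains no run of 3 consecutive edges and let M be a 2-locally-optimal consecutive matching in E. Then for every consecutive matching O in E one has 5·|M| ≥ 2·|O| (i.e., M is a 2.5-approximation of a maximum consecutive matching in E). -/

import Mathlib

/-- Two edges `(i,j)` and `(i',j')` of the bipartite graph overlap if
`|i - i'| ≤ 1` or `|j - j'| ≤ 1`. -/
def Overlap {n : ℕ} (e e' : Fin n × Fin n) : Prop :=
  ((e.1.val : ℤ) - e'.1.val).natAbs ≤ 1 ∨ ((e.2.val : ℤ) - e'.2.val).natAbs ≤ 1

instance {n : ℕ} (e e' : Fin n × Fin n) : Decidable (Overlap e e') := by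
  unfold Overlap; infer_instance

/-- `M` is a consecutive matching in `E`. -/
def ConsecMatching {n : ℕ} (E M : Finset (Fin n × Fin n)) : Prop :=
  M ⊆ E ∧
  (∀ e ∈ M, ∀ e' ∈ M, e ≠ e' → e.1 ≠ e'.1 ∧ e.2 ≠ e'.2) ∧
  (∀ e ∈ M, ∀ e' ∈ M, e'.1.val = e.1.val + 1 → e'.2.val = e.2.val + 1) ∧
  (∀ e ∈ M, ∀ e' ∈ M, e'.2.val = e.2.val + 1 → e'.1.val = e.1.val + 1)

/-- `s` is the run of `ℓ` consecutive edges at `(p, q)`,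
i.e. `s = {(p+r, q+r) : 0 ≤ r < ℓ}`. -/
def IsRunAt {n : ℕ} (s : Finset (Fin n × Fin n)) (p q ℓ : ℕ) : Prop :=
  p + ℓ ≤ n ∧ q + ℓ ≤ n ∧
  ∀ e : Fin n × Fin n, e ∈ s ↔ ∃ r < ℓ, e.1.val = p + r ∧ e.2.val = q + r

/-- `s` is a run of `ℓ` consecutive edges. -/
def IsRun {n : ℕ} (s : Finset (Fin n × Fin n)) (ℓ : ℕ) : Prop :=
  ∃ p q, IsRunAt s p q ℓ

/-- `E` contains no run of `k` consecutive edges. -/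
def NoRun {n : ℕ} (E : Finset (Fin n × Fin n)) (k : ℕ) : Prop :=
  ¬ ∃ s : Finset (Fin n × Fin n), IsRun s k ∧ s ⊆ E

/-- `s` is a streak of `M`: a run of (at least one) consecutive edges contained in `M`,
maximal under inclusion among runs contained in `M`. -/
def IsStreak {n : ℕ} (M s : Finset (Fin n × Fin n)) : Prop :=
  (∃ ℓ, 1 ≤ ℓ ∧ IsRun s ℓ) ∧ s ⊆ M ∧
  ∀ s' ℓ', IsRun s' ℓ' → s' ⊆ M → s ⊆ s' → s' = s

/-- `s 0, …, s (m-1)` is a greedy sequence in `E` with threshold `k`: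
each `s i` is a run of at least `k` consecutive edges, all of whose edges
overlap no edge of the previously chosen runs, and no run of consecutive
edges all still available at step `i` is longer than `s i`. -/
def GreedySeq {n : ℕ} (E : Finset (Fin n × Fin n)) (k m : ℕ)
    (s : ℕ → Finset (Fin n × Fin n)) : Prop :=
  ∀ i < m,
    s i ⊆ E.filter (fun e => ∀ j < i, ∀ e' ∈ s j, ¬ Overlap e e') ∧
    (∃ ℓ, k ≤ ℓ ∧ IsRun (s i) ℓ) ∧
    (∀ r ℓ, IsRun r ℓ →
      r ⊆ E.filter (fun e => ∀ j < i, ∀ e' ∈ s j, ¬ Overlap e e') →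
      ℓ ≤ (s i).card)

/-- `M` is a `t`-locally-optimal consecutive matching in `E`. -/
def LocallyOptimal {n : ℕ} (E M : Finset (Fin n × Fin n)) (t : ℕ) : Prop :=
  ConsecMatching E M ∧
  ¬ ∃ Erem Eadd : Finset (Fin n × Fin n), Erem ⊆ M ∧ Eadd ⊆ E \ M ∧
      Erem.card < Eadd.card ∧ Eadd.card ≤ t ∧
      ConsecMatching E ((M \ Erem) ∪ Eadd)

/-!
Charging argument. Every edge `o ∈ O` sends one unit of charge to each edge of `M` that it
overlaps, and one more unit if it overlaps exactly one edge of `M`. By 1-local optimality `o`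
overlaps some edge of `M`, so it pays at least 2. An edge `m ∈ M` receives at most 5. Without a
run of 3 in `E`, at most two edges of `O` have first coordinate within 1 of that of `m` and at
most two have second coordinate within 1 of it, so at most four edges of `O` overlap `m`. By
2-local optimality at most one edge of `O` overlaps `m` and no other edge of `M`: for two such
edges, either one of them can be added to `M`, or `m` can be exchanged for both.
-/

open Finset

variable {n : ℕ}

theorem Overlap.refl (e : Fin n × Fin n) : Overlap e e := by
  unfold Overlap; omega

theorem Overlap.symm {e e' : Fin n × Fin n} (h : Overlap e e') : Overlap e' e := by
  unfold Overlap at h ⊢; omega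

section Compatible

def Compatible (e e' : Fin n × Fin n) : Prop :=
  (e ≠ e' → e.1 ≠ e'.1 ∧ e.2 ≠ e'.2) ∧
  (e'.1.val = e.1.val + 1 → e'.2.val = e.2.val + 1) ∧
  (e'.2.val = e.2.val + 1 → e'.1.val = e.1.val + 1)

theorem consecMatching_iff {E X : Finset (Fin n × Fin n)} :
    ConsecMatching E X ↔ X ⊆ E ∧ ∀ e ∈ X, ∀ e' ∈ X, Compatible e e' :=
  ⟨fun h => ⟨h.1, fun e he e' he' =>
      ⟨h.2.1 e he e' he', h.2.2.1 e he e' he', h.2.2.2 e he e' he'⟩⟩,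
    fun h => ⟨h.1, fun e he e' he' => (h.2 e he e' he').1,
      fun e he e' he' => (h.2 e he e' he').2.1, fun e he e' he' => (h.2 e he e' he').2.2⟩⟩

theorem compatible_of_not_overlap {e e' : Fin n × Fin n} (h : ¬ Overlap e e') :
    Compatible e e' := by
  unfold Overlap at h
  refine ⟨fun _ => ⟨fun h1 => ?_, fun h2 => ?_⟩, fun _ => ?_, fun _ => ?_⟩
  · have := congrArg Fin.val h1; omega
  · have := congrArg Fin.val h2; omega
  all_goals omega

theorem consecMatching_sdiff_union {E M O R A : Finset (Fin n × Fin n)}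
    (hM : ConsecMatching E M) (hO : ConsecMatching E O) (hAO : A ⊆ O)
    (hcross : ∀ x ∈ M \ R, ∀ y ∈ A, Overlap y x → x ∈ O) :
    ConsecMatching E (M \ R ∪ A) := by
  rw [consecMatching_iff] at hM hO ⊢
  have cross : ∀ x ∈ M \ R, ∀ y ∈ A, Compatible x y ∧ Compatible y x := by
    intro x hx y hy
    by_cases hyx : Overlap y x
    · have hxO := hcross x hx y hy hyx
      exact ⟨hO.2 x hxO y (hAO hy), hO.2 y (hAO hy) x hxO⟩
    · exact ⟨compatible_of_not_overlap (mt Overlap.symm hyx), compatible_of_not_overlap hyx⟩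
  refine ⟨union_subset (sdiff_subset.trans hM.1) (hAO.trans hO.1), ?_⟩
  intro e he e' he'
  rcases mem_union.1 he with he | he <;> rcases mem_union.1 he' with he' | he'
  · exact hM.2 e (mem_sdiff.1 he).1 e' (mem_sdiff.1 he').1
  · exact (cross e he e' he').1
  · exact (cross e' he' e he).2
  · exact hO.2 e (hAO he) e' (hAO he')

end Compatible

section LocalOptimality

variable {E M O : Finset (Fin n × Fin n)} {t : ℕ}

theorem LocallyOptimal.not_improving_swap {R A : Finset (Fin n × Fin n)}
    (hM : LocallyOptimal E M t) (hO : ConsecMatching E O) (hRM : R ⊆ M) (hAO : A ⊆ O)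
    (hAM : Disjoint A M) (hcard : R.card < A.card) (ht : A.card ≤ t)
    (hcross : ∀ x ∈ M \ R, ∀ y ∈ A, Overlap y x → x ∈ O) : False :=
  hM.2 ⟨R, A, hRM, subset_sdiff.2 ⟨hAO.trans hO.1, hAM⟩, hcard, ht,
    consecMatching_sdiff_union hM.1 hO hAO hcross⟩

def overlapping (M : Finset (Fin n × Fin n)) (o : Fin n × Fin n) : Finset (Fin n × Fin n) :=
  M.filter (fun x => Overlap o x)

theorem LocallyOptimal.overlapping_nonempty (hM : LocallyOptimal E M t) (ht : 1 ≤ t)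
    (hO : ConsecMatching E O) {o : Fin n × Fin n} (ho : o ∈ O) :
    (overlapping M o).Nonempty := by
  by_cases hoM : o ∈ M
  · exact ⟨o, mem_filter.2 ⟨hoM, Overlap.refl o⟩⟩
  by_contra hempty
  rw [not_nonempty_iff_eq_empty] at hempty
  refine hM.not_improving_swap hO (empty_subset M) (singleton_subset_iff.2 ho)
    (disjoint_singleton_left.2 hoM) (by simp) (by simpa using ht) ?_
  intro x hx y hy hyx
  rw [mem_singleton] at hy
  subst hy
  have hx' : x ∈ overlapping M y := mem_filter.2 ⟨(mem_sdiff.1 hx).1, hyx⟩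
  simp [hempty] at hx'

theorem LocallyOptimal.card_filter_overlapping_eq_singleton_le_one (hM : LocallyOptimal E M t)
    (ht : 2 ≤ t) (hO : ConsecMatching E O) (m : Fin n × Fin n) :
    (O.filter (fun o => overlapping M o = {m})).card ≤ 1 := by
  rw [card_le_one]
  intro a ha b hb
  by_contra hab
  simp only [mem_filter] at ha hb
  have eq_m : ∀ u, overlapping M u = {m} → ∀ x ∈ M, Overlap u x → x = m :=
    fun u hu x hx hux => mem_singleton.1 (hu ▸ mem_filter.2 ⟨hx, hux⟩)
  have hm : m ∈ M := (mem_filter.1 (ha.2 ▸ mem_singleton_self m : m ∈ overlapping M a)).1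
  by_cases hmO : m ∈ O
  · -- `a` and `b` cannot both be `m`, and the other one can be added to `M`
    obtain ⟨u, huO, hu, huM⟩ : ∃ u ∈ O, overlapping M u = {m} ∧ u ∉ M := by
      by_cases haM : a ∈ M
      · refine ⟨b, hb.1, hb.2, fun hbM => hab ?_⟩
        rw [eq_m a ha.2 a haM (Overlap.refl a), eq_m b hb.2 b hbM (Overlap.refl b)]
      · exact ⟨a, ha.1, ha.2, haM⟩
    refine hM.not_improving_swap hO (empty_subset M) (singleton_subset_iff.2 huO)
      (disjoint_singleton_left.2 huM) (by simp) (by rw [card_singleton]; omega) ?_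
    intro x hx y hy hyx
    rw [mem_singleton] at hy
    subst hy
    rwa [eq_m y hu x (mem_sdiff.1 hx).1 hyx]
  · -- neither `a` nor `b` lies in `M`, and `m` can be exchanged for both
    have hAM : Disjoint {a, b} M := by
      rw [disjoint_insert_left, disjoint_singleton_left]
      exact ⟨fun haM => hmO (eq_m a ha.2 a haM (Overlap.refl a) ▸ ha.1),
        fun hbM => hmO (eq_m b hb.2 b hbM (Overlap.refl b) ▸ hb.1)⟩
    refine hM.not_improving_swap hO (singleton_subset_iff.2 hm) (insert_subset ha.1 (singleton_subset_iff.2 hb.1)) hAM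
      (by rw [card_singleton, card_pair hab]; omega) (by rwa [card_pair hab]) ?_
    intro x hx y hy hyx
    have hy' : overlapping M y = {m} := by
      rcases mem_insert.1 hy with rfl | hy
      · exact ha.2
      · rw [mem_singleton.1 hy]; exact hb.2
    obtain ⟨hxM, hxm⟩ := mem_sdiff.1 hx
    exact absurd (mem_singleton.2 (eq_m y hy' x hxM hyx)) hxm

end LocalOptimality

section NoRun

variable {E O : Finset (Fin n × Fin n)}

theorem NoRun.not_consecutive_triple (hE : NoRun E 3) {a b c : Fin n × Fin n}
    (ha : a ∈ E) (hb : b ∈ E) (hc : c ∈ E)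
    (hab₁ : b.1.val = a.1.val + 1) (hab₂ : b.2.val = a.2.val + 1)
    (hbc₁ : c.1.val = b.1.val + 1) (hbc₂ : c.2.val = b.2.val + 1) : False := by
  refine hE ⟨{a, b, c}, ⟨a.1.val, a.2.val, by omega, by omega, fun e => ?_⟩, ?_⟩
  · simp only [mem_insert, mem_singleton]
    constructor
    · rintro (rfl | rfl | rfl)
      exacts [⟨0, by omega, by omega, by omega⟩, ⟨1, by omega, by omega, by omega⟩,
        ⟨2, by omega, by omega, by omega⟩]
    · rintro ⟨r, hr, h₁, h₂⟩
      interval_cases r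
      · exact Or.inl (Prod.ext (Fin.ext (by omega)) (Fin.ext (by omega)))
      · exact Or.inr (Or.inl (Prod.ext (Fin.ext (by omega)) (Fin.ext (by omega))))
      · exact Or.inr (Or.inr (Prod.ext (Fin.ext (by omega)) (Fin.ext (by omega))))
  · simp only [insert_subset_iff, singleton_subset_iff]
    exact ⟨ha, hb, hc⟩

theorem card_filter_natAbs_sub_le_two {α : Type*} {S : Finset α} (π : α → ℕ)
    (hinj : Set.InjOn π S)
    (hno : ∀ a ∈ S, ∀ b ∈ S, ∀ c ∈ S, π b = π a + 1 → π c = π b + 1 → False) (i : ℕ) :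
    (S.filter (fun x => ((π x : ℤ) - i).natAbs ≤ 1)).card ≤ 2 := by
  by_contra! hlt
  set T := S.filter (fun x => ((π x : ℤ) - i).natAbs ≤ 1)
  have hcard : (T.image π).card = T.card :=
    card_image_of_injOn (hinj.mono (coe_subset.2 (filter_subset _ _)))
  have hsub : T.image π ⊆ Icc (i - 1) (i + 1) := by
    intro k hk
    obtain ⟨x, hx, rfl⟩ := mem_image.1 hk
    have := (mem_filter.1 hx).2
    rw [mem_Icc]
    omega
  have hIcc := card_le_card hsub
  rw [Nat.card_Icc] at hIcc
  have heq : T.image π = Icc (i - 1) (i + 1) :=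
    eq_of_subset_of_card_le hsub (by rw [Nat.card_Icc]; omega)
  have hval : ∀ k, i - 1 ≤ k → k ≤ i + 1 → ∃ x ∈ S, π x = k := by
    intro k hk₁ hk₂
    have hk : k ∈ T.image π := heq ▸ mem_Icc.2 ⟨hk₁, hk₂⟩
    obtain ⟨x, hx, hxk⟩ := mem_image.1 hk
    exact ⟨x, (mem_filter.1 hx).1, hxk⟩
  obtain ⟨a, ha, ha'⟩ := hval (i - 1) le_rfl (by omega)
  obtain ⟨b, hb, hb'⟩ := hval i (by omega) (by omega)
  obtain ⟨c, hc, hc'⟩ := hval (i + 1) (by omega) le_rfl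
  exact hno a ha b hb c hc (by omega) (by omega)

theorem ConsecMatching.card_filter_near_fst_le_two (hE : NoRun E 3) (hO : ConsecMatching E O)
    (i : ℕ) : (O.filter (fun o => ((o.1.val : ℤ) - i).natAbs ≤ 1)).card ≤ 2 :=
  card_filter_natAbs_sub_le_two (fun o => o.1.val)
    (fun a ha b hb h => by_contra fun hne => (hO.2.1 a ha b hb hne).1 (Fin.ext h))
    (fun a ha b hb c hc hab hbc => hE.not_consecutive_triple (hO.1 ha) (hO.1 hb) (hO.1 hc)
      hab (hO.2.2.1 a ha b hb hab) hbc (hO.2.2.1 b hb c hc hbc)) i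

theorem ConsecMatching.card_filter_near_snd_le_two (hE : NoRun E 3) (hO : ConsecMatching E O)
    (i : ℕ) : (O.filter (fun o => ((o.2.val : ℤ) - i).natAbs ≤ 1)).card ≤ 2 :=
  card_filter_natAbs_sub_le_two (fun o => o.2.val)
    (fun a ha b hb h => by_contra fun hne => (hO.2.1 a ha b hb hne).2 (Fin.ext h))
    (fun a ha b hb c hc hab hbc => hE.not_consecutive_triple (hO.1 ha) (hO.1 hb) (hO.1 hc)
      (hO.2.2.2 a ha b hb hab) hab (hO.2.2.2 b hb c hc hbc) hbc) i

theorem ConsecMatching.card_filter_overlap_le_four (hE : NoRun E 3) (hO : ConsecMatching E O)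
    (m : Fin n × Fin n) : (O.filter (fun o => Overlap o m)).card ≤ 4 := by
  have hsub : O.filter (fun o => Overlap o m) ⊆
      O.filter (fun o => ((o.1.val : ℤ) - m.1.val).natAbs ≤ 1) ∪
        O.filter (fun o => ((o.2.val : ℤ) - m.2.val).natAbs ≤ 1) := by
    intro o ho
    simp only [mem_union, mem_filter] at ho ⊢
    unfold Overlap at ho
    tauto
  calc (O.filter (fun o => Overlap o m)).card
      ≤ (O.filter (fun o => ((o.1.val : ℤ) - m.1.val).natAbs ≤ 1)).card +
        (O.filter (fun o => ((o.2.val : ℤ) - m.2.val).natAbs ≤ 1)).card :=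
        (card_le_card hsub).trans (card_union_le _ _)
    _ ≤ 2 + 2 := add_le_add (hO.card_filter_near_fst_le_two hE _)
        (hO.card_filter_near_snd_le_two hE _)

end NoRun

def charge (M : Finset (Fin n × Fin n)) (o m : Fin n × Fin n) : ℕ :=
  (if Overlap o m then 1 else 0) + (if overlapping M o = {m} then 1 else 0)

theorem two_le_sum_charge {M : Finset (Fin n × Fin n)} {o : Fin n × Fin n}
    (ho : (overlapping M o).Nonempty) : 2 ≤ ∑ m ∈ M, charge M o m := by
  simp only [charge, sum_add_distrib]
  rw [← card_filter, ← overlapping]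
  rcases Nat.lt_or_ge 1 (overlapping M o).card with h | h
  · omega
  · obtain ⟨m, hm⟩ := card_eq_one.1 (le_antisymm h ho.card_pos)
    have hmM : m ∈ M := (mem_filter.1 (hm ▸ mem_singleton_self m : m ∈ overlapping M o)).1
    rw [hm, card_singleton]
    have := single_le_sum (f := fun x => if ({m} : Finset (Fin n × Fin n)) = {x} then 1 else 0)
      (fun _ _ => Nat.zero_le _) hmM
    rw [if_pos rfl] at this
    omega

theorem sum_charge_le_five {E M O : Finset (Fin n × Fin n)} (hE : NoRun E 3)
    (hM : LocallyOptimal E M 2) (hO : ConsecMatching E O) (m : Fin n × Fin n) :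
    ∑ o ∈ O, charge M o m ≤ 5 := by
  simp only [charge, sum_add_distrib]
  rw [← card_filter, ← card_filter]
  have := hO.card_filter_overlap_le_four hE m
  have := hM.card_filter_overlapping_eq_singleton_le_one le_rfl hO m
  omega

theorem local_search_2_5_approx_general {n : ℕ}
    (E : Finset (Fin n × Fin n)) (hE : NoRun E 3)
    (M : Finset (Fin n × Fin n)) (hM : LocallyOptimal E M 2)
    (O : Finset (Fin n × Fin n)) (hO : ConsecMatching E O) :
    5 * M.card ≥ 2 * O.card :=
  calc 2 * O.card = O.card • 2 := by rw [smul_eq_mul, mul_comm]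
    _ ≤ ∑ o ∈ O, ∑ m ∈ M, charge M o m :=
      card_nsmul_le_sum _ _ _ fun o ho =>
        two_le_sum_charge (hM.overlapping_nonempty one_le_two hO ho)
    _ = ∑ m ∈ M, ∑ o ∈ O, charge M o m := sum_comm
    _ ≤ M.card • 5 := sum_le_card_nsmul _ _ _ fun m _ => sum_charge_le_five hE hM hO m
    _ = 5 * M.card := by rw [smul_eq_mul, mul_comm]

/-- if `E` contains no run of 3 consecutive edges and `M` is a
2-locally-optimal consecutive matching in `E`, then `5|M| ≥ 2|O|` for every
consecutive matching `O` in `E`. -/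
theorem local_search_2_5_approx {n : ℕ} (hn : 1 ≤ n)
    (E : Finset (Fin n × Fin n)) (hE : NoRun E 3)
    (M : Finset (Fin n × Fin n)) (hM : LocallyOptimal E M 2)
    (O : Finset (Fin n × Fin n)) (hO : ConsecMatching E O) :
    5 * M.card ≥ 2 * O.card :=
  local_search_2_5_approx_general E hE M hM O hO
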